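/- Let G be a simple graph on a finite vertex type V and let k be a positive integer. Suppose G admits a permutational 1-11-representation consisting of k permutations, and G admits no permutational 1-11-representation consisting of fewer than k permutations (i.e., the permutational 1-11-representation number of G equals k). Then every permutational 1-11-representation of G consisting of exactly k permutations is cube-free. -/

import Mathlib

/-- The restriction `w_{x,y}` of a word `w`: the sublist of all letters equal to `x` or `y`. -/
def restrict {V : Type*} [DecidableEq V] (w : List V) (x y : V) : List V :=
  w.filter (fun z => decide (z = x ∨ z = y))

/-- The number of occurrences of the factor `xx` in a word `u`: the number of indices `i`
with `i + 1 < u.length` and `u[i] = u[i+1] = x`. -/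
def factorXXCount {V : Type*} [DecidableEq V] (u : List V) (x : V) : ℕ :=
  ((Finset.range u.length).filter (fun i => u[i]? = some x ∧ u[i + 1]? = some x)).card

/-- `w` is a 1-11-representation of `G`: every vertex occurs in `w`, and two distinct
vertices are adjacent iff the total number of occurrences of the factors `xx` and `yy`
in the restriction `w_{x,y}` is at most 1. -/
def Is111Rep {V : Type*} [DecidableEq V] (G : SimpleGraph V) (w : List V) : Prop :=
  (∀ v : V, v ∈ w) ∧
    ∀ x y : V, x ≠ y →
      (G.Adj x y ↔
        factorXXCount (restrict w x y) x + factorXXCount (restrict w x y) y ≤ 1)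

/-- A permutation of `V`, as a list: every element of `V` occurs exactly once. -/
def IsPermList {V : Type*} [DecidableEq V] (P : List V) : Prop :=
  ∀ v : V, P.count v = 1

/-- `w` is a concatenation of `k ≥ 1` permutations of `V`. -/
def IsPermConcat {V : Type*} [DecidableEq V] (w : List V) : Prop :=
  ∃ Ps : List (List V), Ps ≠ [] ∧ (∀ P ∈ Ps, IsPermList P) ∧ w = Ps.flatten

/-- `w` is a permutational 1-11-representation of `G`. -/
def IsPerm111Rep {V : Type*} [DecidableEq V] (G : SimpleGraph V) (w : List V) : Prop :=
  Is111Rep G w ∧ IsPermConcat w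

/-- `w` contains a cube `XXX` with `X` nonempty. -/
def ContainsCube {V : Type*} (w : List V) : Prop :=
  ∃ s1 X s2 : List V, X ≠ [] ∧ w = s1 ++ X ++ X ++ X ++ s2

/-- `w` contains a square `XX` with `X` nonempty. -/
def ContainsSquare {V : Type*} (w : List V) : Prop :=
  ∃ s1 X s2 : List V, X ≠ [] ∧ w = s1 ++ X ++ X ++ s2

/-- `G₀`: the disjoint union of a triangle on `{0,1,2}` and the isolated vertex `3`,
as a simple graph on `Fin 4`. -/
def G₀ : SimpleGraph (Fin 4) :=
  SimpleGraph.fromRel (fun a b => a ≠ 3 ∧ b ≠ 3)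

section
variable {V : Type*} [DecidableEq V]

lemma fxx_nil (x : V) : factorXXCount ([] : List V) x = 0 := by
  simp [factorXXCount]

lemma fxx_cons (a : V) (l : List V) (x : V) :
    factorXXCount (a :: l) x =
      (if a = x ∧ l.head? = some x then 1 else 0) + factorXXCount l x := by
  unfold factorXXCount
  rw [Finset.card_filter, Finset.card_filter, List.length_cons, Finset.sum_range_succ']
  simp only [List.getElem?_cons_succ, List.getElem?_cons_zero, Option.some_inj]
  rw [add_comm]
  congr 1
  rw [List.head?_eq_getElem?]

def junct (x : V) (o₁ o₂ : Option V) : ℕ :=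
  if o₁ = some x ∧ o₂ = some x then 1 else 0

lemma fxx_append (u v : List V) (x : V) :
    factorXXCount (u ++ v) x =
      factorXXCount u x + factorXXCount v x + junct x u.getLast? v.head? := by
  induction u with
  | nil => simp [fxx_nil, junct]
  | cons a u ih =>
    rw [List.cons_append, fxx_cons, ih, fxx_cons]
    cases u with
    | nil =>
      simp only [List.nil_append, fxx_nil, List.head?_nil, List.getLast?_nil,
        List.getLast?_singleton, junct, Option.some_inj]
      by_cases h1 : a = x
      · subst h1
        by_cases h2 : v.head? = some a <;> simp [h2, Nat.add_comm]
      · simp [h1]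
    | cons b u' =>
      rw [List.head?_append_of_ne_nil _ (by simp), List.getLast?_cons_cons]
      simp only [List.head?_cons]
      omega

lemma fxx_le_append (u v : List V) (x : V) :
    factorXXCount v x ≤ factorXXCount (u ++ v) x := by
  rw [fxx_append]; omega


lemma restrict_append (u v : List V) (x y : V) :
    restrict (u ++ v) x y = restrict u x y ++ restrict v x y := by
  simp [restrict, List.filter_append]

lemma mem_restrict {w : List V} {x y a : V} (h : a ∈ restrict w x y) : a = x ∨ a = y := by
  simp only [restrict, List.mem_filter, decide_eq_true_eq] at h
  exact h.2

lemma count_restrict_left (w : List V) (x y : V) : (restrict w x y).count x = w.count x := by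
  unfold restrict
  exact List.count_filter (by simp)

lemma count_restrict_right (w : List V) (x y : V) : (restrict w x y).count y = w.count y := by
  unfold restrict
  exact List.count_filter (by simp)

lemma length_eq_of_count [Fintype V] (l : List V) (c : ℕ) (h : ∀ v, l.count v = c) :
    l.length = c * Fintype.card V := by
  have hm : (l : Multiset V) = c • (Finset.univ : Finset V).val := by
    refine Multiset.ext.mpr fun a => ?_
    rw [Multiset.count_nsmul, Multiset.coe_count, h a,
      Multiset.count_eq_one_of_mem Finset.univ.nodup (Finset.mem_univ a), mul_one]
  have := congrArg Multiset.card hm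
  rw [Multiset.coe_card, Multiset.card_nsmul] at this
  exact this

lemma flatten_count (Ps : List (List V)) (hP : ∀ P ∈ Ps, IsPermList P) (v : V) :
    Ps.flatten.count v = Ps.length := by
  induction Ps with
  | nil => simp
  | cons P t ih =>
    simp only [List.flatten_cons, List.count_append, List.length_cons]
    rw [hP P (by simp) v, ih (fun Q hQ => hP Q (by simp [hQ]))]
    omega

lemma take_flatten_aligned [Fintype V] (Ps : List (List V)) (hP : ∀ P ∈ Ps, IsPermList P)
    (v : V) : ∀ i ≤ Ps.length,
      ((Ps.flatten).take (i * Fintype.card V)).count v = i := by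
  induction Ps with
  | nil => intro i hi; simp [Nat.le_zero.mp hi]
  | cons P t ih =>
    intro i hi
    have hPlen : P.length = Fintype.card V := by
      simpa using length_eq_of_count P 1 (hP P (by simp))
    match i with
    | 0 => simp
    | (j+1) =>
      have he : (j+1) * Fintype.card V = P.length + j * Fintype.card V := by
        rw [hPlen]; ring
      rw [List.flatten_cons, he, List.take_length_add_append, List.count_append,
        hP P (by simp) v, ih (fun Q hQ => hP Q (by simp [hQ])) j (by simpa using hi)]
      omega

lemma take_count_bounds [Fintype V] (Ps : List (List V)) (hP : ∀ P ∈ Ps, IsPermList P)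
    (hn : 0 < Fintype.card V) (v : V) :
    ∀ L ≤ Ps.length * Fintype.card V,
      L / Fintype.card V ≤ ((Ps.flatten).take L).count v ∧
      ((Ps.flatten).take L).count v ≤ L / Fintype.card V + 1 := by
  set n := Fintype.card V with hndef
  induction Ps with
  | nil =>
    intro L hL
    have : L = 0 := by simpa using hL
    simp [this]
  | cons P t ih =>
    intro L hL
    have hPlen : P.length = n := by
      simpa using length_eq_of_count P 1 (hP P (by simp))
    have ht : ∀ Q ∈ t, IsPermList Q := fun Q hQ => hP Q (by simp [hQ])
    by_cases hc : L ≤ n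
    · have e : ((P :: t).flatten).take L = P.take L := by
        rw [List.flatten_cons, List.take_append_of_le_length (by omega)]
      rw [e]
      have hle : (P.take L).count v ≤ P.count v := (List.take_sublist L P).count_le v
      rw [hP P (by simp) v] at hle
      rcases eq_or_lt_of_le hc with he | hlt
      · have e2 : P.take L = P := by rw [he, ← hPlen]; exact List.take_length
        rw [e2, hP P (by simp) v, he, Nat.div_self hn]
        omega
      · rw [Nat.div_eq_of_lt hlt]
        omega
    · push_neg at hc
      have e2 : ((P :: t).flatten).take L = P ++ (t.flatten).take (L - n) := by
        conv_lhs => rw [List.flatten_cons, show L = P.length + (L - n) from by omega]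
        rw [List.take_length_add_append]
      rw [e2, List.count_append, hP P (by simp) v]
      have hmul : (P :: t).length * n = t.length * n + n := by
        simp [List.length_cons]; ring
      have hL' : L - n ≤ t.length * n := by omega
      have hdiv : L / n = (L - n) / n + 1 := Nat.div_eq_sub_div hn (by omega)
      have := ih ht (L - n) hL'
      omega

lemma decomp [Fintype V] (hn : 0 < Fintype.card V) :
    ∀ (j : ℕ) (u : List V), u.length = j * Fintype.card V →
      (∀ (v : V) (i : ℕ), i ≤ j → ((u.take (i * Fintype.card V)).count v = i)) →
      ∃ Ps : List (List V), Ps.length = j ∧ (∀ P ∈ Ps, IsPermList P) ∧ u = Ps.flatten := by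
  set n := Fintype.card V with hndef
  intro j
  induction j with
  | zero =>
    intro u hlen _
    refine ⟨[], rfl, by simp, ?_⟩
    simpa using List.length_eq_zero_iff.mp (by omega)
  | succ j ih =>
    intro u hlen halign
    have hperm : IsPermList (u.take n) := by
      intro v
      have := halign v 1 (by omega)
      simpa using this
    have hdroplen : (u.drop n).length = j * n := by
      rw [List.length_drop, hlen]; rw [Nat.succ_mul]; omega
    have hdropalign : ∀ (v : V) (i : ℕ), i ≤ j → (((u.drop n).take (i * n)).count v = i) := by
      intro v i hi
      have h1 := halign v (i + 1) (by omega)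
      have h2 := halign v 1 (by omega)
      rw [show (i + 1) * n = n + i * n by ring, List.take_add, List.count_append] at h1
      simp only [one_mul] at h2
      omega
    obtain ⟨Ps, hl, hp, hu⟩ := ih (u.drop n) hdroplen hdropalign
    refine ⟨u.take n :: Ps, by simp [hl], ?_, ?_⟩
    · intro P hP
      rcases List.mem_cons.mp hP with h | h
      · subst h; exact hperm
      · exact hp P h
    · rw [List.flatten_cons, ← hu, List.take_append_drop]


lemma alt (x y : V) (hxy : x ≠ y) :
    ∀ l : List V, (∀ a ∈ l, a = x ∨ a = y) →
      factorXXCount l x + factorXXCount l y = 0 →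
      (l.count x : ℤ) - (l.count y : ℤ) =
        if l.head? = l.getLast? ∧ l ≠ [] then (if l.head? = some x then 1 else -1) else 0 := by
  intro l
  induction l with
  | nil => simp
  | cons a t ih =>
    intro hmem hf
    cases t with
    | nil =>
      rcases hmem a (by simp) with ha | ha <;> subst ha
      · simp [List.count_cons, hxy, Ne.symm hxy]
      · simp [List.count_cons, hxy, Ne.symm hxy]
    | cons b t' =>
      rw [fxx_cons a (b :: t') x, fxx_cons a (b :: t') y] at hf
      simp only [List.head?_cons, Option.some_inj] at hf
      have hma : a = x ∨ a = y := hmem a (by simp)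
      have hmb : b = x ∨ b = y := hmem b (by simp)
      by_cases h1 : a = x ∧ b = x
      · rw [if_pos h1] at hf; omega
      rw [if_neg h1] at hf
      by_cases h2 : a = y ∧ b = y
      · rw [if_pos h2] at hf; omega
      rw [if_neg h2] at hf
      have hf' : factorXXCount (b :: t') x + factorXXCount (b :: t') y = 0 := by omega
      have ht := ih (fun z hz => hmem z (by simp [hz])) hf'
      obtain ⟨cl, hcl⟩ : ∃ cl, (b :: t').getLast? = some cl := by
        cases hgl : (b :: t').getLast? with
        | none => exact absurd (List.getLast?_eq_none_iff.mp hgl) (by simp)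
        | some cc => exact ⟨cc, rfl⟩
      have hmc : cl = x ∨ cl = y :=
        hmem cl (List.mem_cons_of_mem a (List.mem_of_mem_getLast? (by simp [hcl])))
      rw [List.getLast?_cons_cons, hcl]
      rw [hcl] at ht
      simp only [List.head?_cons] at ht
      rcases hma with ha | ha <;> subst ha
      · have hb : b = y := by
          rcases hmb with hb | hb
          · exact absurd ⟨rfl, hb⟩ h1
          · exact hb
        subst hb
        rcases hmc with hcx | hcx <;> subst hcx <;>
          simp_all [List.count_cons, hxy, Ne.symm hxy] <;> omega
      · have hb : b = x := by
          rcases hmb with hb | hb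
          · exact hb
          · exact absurd ⟨rfl, hb⟩ h2
        subst hb
        rcases hmc with hcx | hcx <;> subst hcx <;>
          simp_all [List.count_cons, hxy, Ne.symm hxy] <;> omega

lemma no_loop (x y : V) (hxy : x ≠ y) (R : List V) (hmem : ∀ a ∈ R, a = x ∨ a = y)
    (hcnt : R.count x = R.count y) (hne : R ≠ [])
    (hf : factorXXCount R x + factorXXCount R y = 0) :
    junct x R.getLast? R.head? + junct y R.getLast? R.head? = 0 := by
  have h := alt x y hxy R hmem hf
  have h0 : (R.count x : ℤ) - (R.count y : ℤ) = 0 := by rw [hcnt]; ring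
  rw [h0] at h
  have hne2 : R.head? ≠ R.getLast? := by
    intro e
    rw [if_pos ⟨e, hne⟩] at h
    split at h <;> omega
  have j1 : ¬(R.getLast? = some x ∧ R.head? = some x) :=
    fun hcon => hne2 (hcon.2.trans hcon.1.symm)
  have j2 : ¬(R.getLast? = some y ∧ R.head? = some y) :=
    fun hcon => hne2 (hcon.2.trans hcon.1.symm)
  simp [junct, j1, j2]

lemma key (A R Z : List V) (hR : R ≠ []) (hZ : Z.head? = R.head?) (z : V) :
    factorXXCount (A ++ (R ++ Z)) z
      = factorXXCount (A ++ Z) z + (factorXXCount R z + junct z R.getLast? R.head?) := by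
  rw [fxx_append A (R ++ Z), fxx_append R Z, fxx_append A Z,
    List.head?_append_of_ne_nil _ hR, hZ]
  omega

lemma key2 (A R B : List V) (hR : R ≠ []) (z : V) :
    3 * factorXXCount R z + 2 * junct z R.getLast? R.head?
      ≤ factorXXCount (A ++ (R ++ (R ++ (R ++ B)))) z := by
  rw [fxx_append A, fxx_append R, fxx_append R, fxx_append R,
    List.head?_append_of_ne_nil _ hR, List.head?_append_of_ne_nil _ hR]
  omega

lemma cube_balanced [Fintype V] (Ps : List (List V)) (hP : ∀ P ∈ Ps, IsPermList P)
    (s1 X s2 : List V) (hw : Ps.flatten = s1 ++ (X ++ (X ++ (X ++ s2)))) (u v : V) :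
    X.count u = X.count v := by
  have hn : 0 < Fintype.card V := Fintype.card_pos_iff.mpr ⟨u⟩
  have hwlen : Ps.flatten.length
      = s1.length + (X.length + (X.length + (X.length + s2.length))) := by
    rw [hw]; simp
  have htot : Ps.flatten.length ≤ Ps.length * Fintype.card V :=
    le_of_eq (length_eq_of_count Ps.flatten Ps.length (flatten_count Ps hP))
  have h1 : ∀ z : V, (Ps.flatten.take s1.length).count z = s1.count z := by
    intro z
    rw [hw, List.take_append_of_le_length le_rfl, List.take_length]
  have h4 : ∀ z : V,
      (Ps.flatten.take (s1.length + (X.length + (X.length + X.length)))).count z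
        = s1.count z + 3 * X.count z := by
    intro z
    rw [hw, List.take_length_add_append, List.take_length_add_append, List.take_length_add_append,
      List.take_append_of_le_length le_rfl, List.take_length]
    simp only [List.count_append]
    ring
  have bu1 := take_count_bounds Ps hP hn u s1.length (by omega)
  have bv1 := take_count_bounds Ps hP hn v s1.length (by omega)
  have bu4 := take_count_bounds Ps hP hn u
    (s1.length + (X.length + (X.length + X.length))) (by omega)
  have bv4 := take_count_bounds Ps hP hn v
    (s1.length + (X.length + (X.length + X.length))) (by omega)
  rw [h1 u] at bu1
  rw [h1 v] at bv1
  rw [h4 u] at bu4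
  rw [h4 v] at bv4
  omega

end

/-- If the permutational 1-11-representation number of `G` equals `k`, then every
permutational 1-11-representation of `G` consisting of exactly `k` permutations is
cube-free. -/
theorem stmt7 {V : Type*} [Fintype V] [DecidableEq V] (G : SimpleGraph V) (k : ℕ)
    (hk : 0 < k)
    (hex : ∃ Ps : List (List V), Ps.length = k ∧ (∀ P ∈ Ps, IsPermList P) ∧
      Is111Rep G Ps.flatten)
    (hmin : ∀ Ps : List (List V), Ps ≠ [] → (∀ P ∈ Ps, IsPermList P) →
      Is111Rep G Ps.flatten → k ≤ Ps.length) :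
    ∀ Ps : List (List V), Ps.length = k → (∀ P ∈ Ps, IsPermList P) →
      Is111Rep G Ps.flatten → ¬ ContainsCube Ps.flatten := by
  intro Ps hlen hperm hrep hcube
  obtain ⟨s1, X, s2, hX, hw0⟩ := hcube
  have hw : Ps.flatten = s1 ++ (X ++ (X ++ (X ++ s2))) := by
    simpa [List.append_assoc] using hw0
  obtain ⟨a, ha⟩ := List.exists_mem_of_ne_nil X hX
  have hnV : 0 < Fintype.card V := Fintype.card_pos_iff.mpr ⟨a⟩
  have hcpos : 0 < X.count a := List.count_pos_iff.mpr ha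
  set c := X.count a with hcdef
  have hcc : ∀ v, X.count v = c := fun v => cube_balanced Ps hperm s1 X s2 hw v a
  have hXlen : X.length = c * Fintype.card V := length_eq_of_count X c hcc
  have hwcount : ∀ v, (Ps.flatten).count v = k := by
    intro v; rw [flatten_count Ps hperm v, hlen]
  have hkc : ∀ v : V, s1.count v + 3 * c + s2.count v = k := by
    intro v
    have h := hwcount v
    rw [hw] at h
    simp only [List.count_append, hcc v] at h
    omega
  set w' : List V := s1 ++ (X ++ (X ++ s2)) with hw'def
  have hw'count : ∀ v : V, w'.count v = k - c := by
    intro v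
    have h := hkc v
    simp only [hw'def, List.count_append, hcc v]
    omega
  have hkgec : 3 * c ≤ k := by have := hkc a; omega
  have hw'len : w'.length = (k - c) * Fintype.card V :=
    length_eq_of_count w' (k - c) hw'count
  -- aligned prefix counts for w'
  have halign : ∀ (v : V) (i : ℕ), i ≤ k - c →
      ((w'.take (i * Fintype.card V)).count v = i) := by
    intro v i hi
    have hiw := take_flatten_aligned Ps hperm v
    by_cases hcase : i * Fintype.card V ≤ s1.length
    · have h1 : Ps.flatten.take (i * Fintype.card V) = w'.take (i * Fintype.card V) := by
        rw [hw, hw'def, List.take_append_of_le_length hcase,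
          List.take_append_of_le_length hcase]
      rw [← h1]
      exact hiw i (by omega)
    · push_neg at hcase
      have e1 : w'.take (i * Fintype.card V)
          = s1 ++ ((X ++ (X ++ s2)).take (i * Fintype.card V - s1.length)) := by
        conv_lhs => rw [hw'def, show i * Fintype.card V
          = s1.length + (i * Fintype.card V - s1.length) from by omega]
        rw [List.take_length_add_append]
      have e2 : Ps.flatten.take ((i + c) * Fintype.card V) =
          s1 ++ (X ++ ((X ++ (X ++ s2)).take (i * Fintype.card V - s1.length))) := by
        conv_lhs => rw [hw, show (i + c) * Fintype.card V
          = s1.length + (X.length + (i * Fintype.card V - s1.length)) from by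
            rw [hXlen, add_mul]; omega]
        rw [List.take_length_add_append, List.take_length_add_append]
      have h2 := hiw (i + c) (by omega)
      rw [e2] at h2
      rw [e1]
      simp only [List.count_append, hcc v] at h2 ⊢
      omega
  obtain ⟨Ps', hl', hp', hu'⟩ := decomp hnV (k - c) w' hw'len halign
  -- w' is a 1-11-representation of G
  have hmem' : ∀ v : V, v ∈ w' := by
    intro v
    exact List.count_pos_iff.mp (by rw [hw'count v]; omega)
  have hadj : ∀ x y : V, x ≠ y →
      (factorXXCount (restrict Ps.flatten x y) x
          + factorXXCount (restrict Ps.flatten x y) y ≤ 1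
        ↔ factorXXCount (restrict w' x y) x + factorXXCount (restrict w' x y) y ≤ 1) := by
    intro x y hxy
    have hRx : x ∈ restrict X x y := by
      refine List.count_pos_iff.mp ?_
      rw [count_restrict_left, hcc x]
      omega
    have hRne : restrict X x y ≠ [] := List.ne_nil_of_mem hRx
    have hrw : restrict Ps.flatten x y = restrict s1 x y ++ (restrict X x y ++
        (restrict X x y ++ (restrict X x y ++ restrict s2 x y))) := by
      rw [hw]
      simp [restrict_append]
    have hrw' : restrict w' x y = restrict s1 x y ++ (restrict X x y ++
        (restrict X x y ++ restrict s2 x y)) := by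
      rw [hw'def]
      simp [restrict_append]
    have hZh : (restrict X x y ++ (restrict X x y ++ restrict s2 x y)).head?
        = (restrict X x y).head? := List.head?_append_of_ne_nil _ hRne
    have k1x := key (restrict s1 x y) (restrict X x y)
      (restrict X x y ++ (restrict X x y ++ restrict s2 x y)) hRne hZh x
    have k1y := key (restrict s1 x y) (restrict X x y)
      (restrict X x y ++ (restrict X x y ++ restrict s2 x y)) hRne hZh y
    have k2x := key2 (restrict s1 x y) (restrict X x y) (restrict s2 x y) hRne x
    have k2y := key2 (restrict s1 x y) (restrict X x y) (restrict s2 x y) hRne y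
    have hfb : factorXXCount (restrict X x y) x + factorXXCount (restrict X x y) y = 0 →
        junct x (restrict X x y).getLast? (restrict X x y).head?
          + junct y (restrict X x y).getLast? (restrict X x y).head? = 0 := by
      intro hf0
      refine no_loop x y hxy _ (fun a ha => mem_restrict ha) ?_ hRne hf0
      rw [count_restrict_left, count_restrict_right, hcc x, hcc y]
    rw [hrw, hrw']
    rcases Nat.eq_zero_or_pos
      (factorXXCount (restrict X x y) x + factorXXCount (restrict X x y) y) with h0 | h1
    · have hb := hfb h0
      omega
    · omega
  have hrep' : Is111Rep G Ps'.flatten := by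
    rw [← hu']
    exact ⟨hmem', fun x y hxy => (hrep.2 x y hxy).trans (hadj x y hxy)⟩
  have hne' : Ps' ≠ [] := List.length_pos_iff.mp (by omega)
  have hfin := hmin Ps' hne' hp' hrep'
  omega
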